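/- Assume conditions (M), (O), (R), (P). Let U ∈ Cm/∼ be a PIP equivalence class with common unique cover η⁺ of its elements, and Ū := U ∪ {η⁺}. Then for all φ, ψ ∈ Ū the relation φ • ψ belongs to Ū (in particular it is an equivalence relation belonging to C), and (Ū, •) is an abelian group with identity element η⁺ in which every element is its own inverse (a Boolean group). (This is Theorem 10 of the paper, the main structural result: each PIP class of completely meet irreducible congruences of a strongly Fregean algebra, supplemented with the common cover, forms a Boolean group under the complement of symmetric difference restricted to the cover.) -/

import Mathlib

variable {A : Type*}

/-- `η` is a completely meet irreducible member of `C`, with (unique) cover `p` in `C`. -/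
def IsCMI (C : Set (Setoid A)) (η p : Setoid A) : Prop :=
  η ∈ C ∧ p ∈ C ∧ η < p ∧ ∀ β ∈ C, η < β → p ≤ β

/-- A single up or down transposition between the intervals `I[pq.1, pq.2]`
and `I[rs.1, rs.2]` of `C`. -/
def Persp (C : Set (Setoid A)) (pq rs : Setoid A × Setoid A) : Prop :=
  pq.1 ∈ C ∧ pq.2 ∈ C ∧ rs.1 ∈ C ∧ rs.2 ∈ C ∧
    ((pq.1 = pq.2 ⊓ rs.1 ∧ rs.2 = pq.2 ⊔ rs.1) ∨
      (rs.1 = rs.2 ⊓ pq.1 ∧ pq.2 = rs.2 ⊔ pq.1))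

/-- Projectivity of intervals of `C`: a finite chain of up and down transpositions. -/
def Projective (C : Set (Setoid A)) : Setoid A × Setoid A → Setoid A × Setoid A → Prop :=
  Relation.ReflTransGen (Persp C)

/-- Prime interval projectivity `φ ∼ ψ`: the prime intervals `I[φ,φ⁺]` and `I[ψ,ψ⁺]`
over completely meet irreducible members of `C` are projective. -/
def PIP (C : Set (Setoid A)) (φ ψ : Setoid A) : Prop :=
  ∃ p q, IsCMI C φ p ∧ IsCMI C ψ q ∧ Projective C (φ, p) (ψ, q)

/-- `Θ(a,b)`: the least member of `C` containing the pair `(a, b)`. -/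
def theta (C : Set (Setoid A)) (a b : A) : Setoid A :=
  sInf {s | s ∈ C ∧ s.r a b}

/-- The relation `φ • ψ`: the pairs of `p = φ⁺ = ψ⁺` on which `φ` and `ψ` agree
(the complement of the symmetric difference of `φ` and `ψ` intersected with `p`). -/
def Bul (p φ ψ : Setoid A) (x y : A) : Prop :=
  p.r x y ∧ (φ.r x y ↔ ψ.r x y)

/-!
Condition (O) forces every completely meet irreducible `χ` with cover `p` to split each `p`-class
into at most two `χ`-classes, i.e. `χ` obeys a parity rule along `p`; hence `φ • ψ` is an
equivalence relation, and the group laws are identities of the complement of symmetric difference.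

The work is to show `φ • ψ ∈ C`. For distinct `φ, ψ` with cover `p`, the largest member `Λ` of `C`
inside `φ • ψ` is, once it is not below `φ`, completely meet irreducible with cover `p` (modularity,
a maximal member avoiding a pair, and (P)), and the parity rules then give `Λ = φ • ψ`. For `φ, χ`
in one PIP class, follow a chain of transpositions from `I[φ, p]` to `I[χ, p]`: each interval of
the chain transposes up to some `I[ω, p]` for which `φ • ω` is realized. Consecutive `ω`'s share
an interval transposing up to both, which realizes their product, and products are composed using
1-regularity to produce the pair that shows the relevant `Λ` is not below `φ`.
-/

theorem Persp.symm {C : Set (Setoid A)} {I J : Setoid A × Setoid A} (h : Persp C I J) :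
    Persp C J I :=
  ⟨h.2.2.1, h.2.2.2.1, h.1, h.2.1, h.2.2.2.2.symm⟩

theorem Projective.symm {C : Set (Setoid A)} {I J : Setoid A × Setoid A}
    (h : Projective C I J) : Projective C J I := by
  induction h with
  | refl => exact .refl
  | tail _ hstep ih => exact .head hstep.symm ih

def TransposesUp (a b c d : Setoid A) : Prop :=
  a = b ⊓ c ∧ d = b ⊔ c

def IsPrimeInterval (C : Set (Setoid A)) (a b : Setoid A) : Prop :=
  a < b ∧ ∀ δ ∈ C, a ≤ δ → δ ≤ b → δ = a ∨ δ = b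

namespace TransposesUp

variable {C : Set (Setoid A)} {a b c d a' b' : Setoid A}

theorem persp (ha : a ∈ C) (hb : b ∈ C) (hc : c ∈ C) (hd : d ∈ C) (h : TransposesUp a b c d) :
    Persp C (a, b) (c, d) :=
  ⟨ha, hb, hc, hd, Or.inl h⟩

theorem persp_symm (ha : a ∈ C) (hb : b ∈ C) (hc : c ∈ C) (hd : d ∈ C)
    (h : TransposesUp a b c d) : Persp C (c, d) (a, b) :=
  (h.persp ha hb hc hd).symm

theorem trans (h₁ : TransposesUp a' b' a b) (h₂ : TransposesUp a b c d) :
    TransposesUp a' b' c d := by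
  obtain ⟨rfl, rfl⟩ := h₁
  obtain ⟨ha, rfl⟩ := h₂
  have hac : a ≤ c := ha.trans_le inf_le_right
  refine ⟨le_antisymm (inf_le_inf_left _ hac) ?_, by rw [sup_assoc, sup_eq_right.mpr hac]⟩
  exact le_inf inf_le_left ((inf_le_inf_right c le_sup_left).trans ha.ge)

end TransposesUp

theorem iff_iff_iff_comm {a b c d : Prop} : ((a ↔ b) ↔ (c ↔ d)) ↔ ((a ↔ c) ↔ (b ↔ d)) := by
  tauto

section Bul

variable {p φ χ ρ γ δ : Setoid A}

theorem bul_comm : Bul p φ χ = Bul p χ φ := by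
  funext x y
  exact propext (and_congr_right fun _ => Iff.comm)

theorem bul_self : Bul p φ φ = p.r := by
  funext x y
  exact propext (and_iff_left Iff.rfl)

theorem bul_cover (hφ : φ ≤ p) : Bul p φ p = φ.r := by
  funext x y
  exact propext ⟨fun h => h.2.mpr h.1, fun h => ⟨hφ h, iff_of_true h (hφ h)⟩⟩

theorem bul_assoc (hγ : γ.r = Bul p φ χ) (hδ : δ.r = Bul p χ ρ) : Bul p γ ρ = Bul p φ δ := by
  funext x y
  apply propext
  simp only [Bul, hγ, hδ]
  tauto

theorem ne_of_rel_eq_bul {ω : Setoid A} (hφ : ¬p ≤ φ) (hγ : γ.r = Bul p φ ω) : γ ≠ ω := by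
  intro he
  subst he
  obtain ⟨x, y, hpxy, hφxy⟩ : ∃ x y, p.r x y ∧ ¬φ.r x y := by simpa [Setoid.le_def] using hφ
  have h : γ.r x y ↔ Bul p φ γ x y := by rw [hγ]
  simp only [Bul, hpxy, hφxy, true_and, false_iff] at h
  exact iff_not_self h

open Classical in
/-- `φ • ψ` as a setoid; it is `p` (a junk value) where `Bul p φ ψ` is not an equivalence. -/
noncomputable def bulOp (p φ ψ : Setoid A) : Setoid A :=
  if h : Equivalence (Bul p φ ψ) then ⟨_, h⟩ else p

theorem bulOp_eq {ψ : Setoid A} (h : γ.r = Bul p φ ψ) : bulOp p φ ψ = γ := by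
  rw [bulOp, dif_pos (h ▸ γ.iseqv)]
  exact Setoid.eq_iff_rel_eq.mpr h.symm

end Bul

section

variable {C : Set (Setoid A)} {one : A}
  (hInf : ∀ S ⊆ C, sInf S ∈ C) (hSup : ∀ S ⊆ C, sSup S ∈ C)
  (hDir : ∀ D ⊆ C, D.Nonempty → DirectedOn (· ≤ ·) D →
    ∀ x y : A, (sSup D).r x y ↔ ∃ s ∈ D, s.r x y)
  (hM : ∀ x ∈ C, ∀ y ∈ C, ∀ z ∈ C, x ≤ z → x ⊔ y ⊓ z = (x ⊔ y) ⊓ z)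
  (hO : ∀ α ∈ C, ∀ a b : A, α ⊔ theta C one a = α ⊔ theta C one b ↔ α.r a b)
  (hR : ∀ α ∈ C, ∀ β ∈ C, (∀ x : A, α.r one x ↔ β.r one x) → α = β)
  (hP : ∀ φ ψ p q : Setoid A, IsCMI C φ p → IsCMI C ψ q →
    Projective C (φ, p) (ψ, q) → p = q)

include hInf in
theorem inf_mem_of_sInf_mem {α β : Setoid A} (hα : α ∈ C) (hβ : β ∈ C) : α ⊓ β ∈ C := by
  simpa using hInf {α, β} (Set.pair_subset hα hβ)

include hSup in
theorem sup_mem_of_sSup_mem {α β : Setoid A} (hα : α ∈ C) (hβ : β ∈ C) : α ⊔ β ∈ C := by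
  simpa using hSup {α, β} (Set.pair_subset hα hβ)

include hInf in
theorem theta_mem (a b : A) : theta C a b ∈ C :=
  hInf _ fun _ hs => hs.1

theorem theta_rel (a b : A) : (theta C a b).r a b :=
  fun _ hs => hs.2

theorem theta_le {s : Setoid A} {a b : A} (hs : s ∈ C) (h : s.r a b) : theta C a b ≤ s :=
  sInf_le ⟨hs, h⟩

namespace IsCMI

variable {φ ψ p q β δ : Setoid A}

theorem mem (h : IsCMI C φ p) : φ ∈ C := h.1

theorem cover_mem (h : IsCMI C φ p) : p ∈ C := h.2.1

theorem lt (h : IsCMI C φ p) : φ < p := h.2.2.1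

theorem cover_le (h : IsCMI C φ p) (hβ : β ∈ C) (hφβ : φ < β) : p ≤ β := h.2.2.2 β hβ hφβ

theorem cover_le_of_rel (h : IsCMI C φ p) (hβ : β ∈ C) (hφβ : φ ≤ β) {x y : A}
    (hxy : β.r x y) (hφxy : ¬φ.r x y) : p ≤ β :=
  h.cover_le hβ (lt_of_le_of_ne hφβ fun he => hφxy (he ▸ hxy))

theorem cover_unique (h₁ : IsCMI C φ p) (h₂ : IsCMI C φ q) : p = q :=
  le_antisymm (h₁.cover_le h₂.cover_mem h₂.lt) (h₂.cover_le h₁.cover_mem h₁.lt)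

theorem isPrimeInterval (h : IsCMI C φ p) : IsPrimeInterval C φ p := by
  refine ⟨h.lt, fun δ hδ hφδ hδp => ?_⟩
  rcases eq_or_ne φ δ with rfl | hne
  · exact Or.inl rfl
  · exact Or.inr (le_antisymm hδp (h.cover_le hδ (lt_of_le_of_ne hφδ hne)))

theorem not_le (hφ : IsCMI C φ p) (hψ : IsCMI C ψ p) (hne : φ ≠ ψ) : ¬φ ≤ ψ := fun hle =>
  not_le_of_gt hψ.lt (hφ.cover_le hψ.mem (lt_of_le_of_ne hle hne))

include hSup in
theorem sup_eq_of_not_le (h : IsCMI C φ p) (hβ : β ∈ C) (hβp : β ≤ p) (hβφ : ¬β ≤ φ) :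
    φ ⊔ β = p :=
  le_antisymm (sup_le h.lt.le hβp) <| h.cover_le (sup_mem_of_sSup_mem hSup h.mem hβ) <|
    lt_of_le_of_ne le_sup_left fun he => hβφ (he ▸ le_sup_right)

include hSup in
theorem sup_eq (hφ : IsCMI C φ p) (hψ : IsCMI C ψ p) (hne : φ ≠ ψ) : φ ⊔ ψ = p :=
  hφ.sup_eq_of_not_le hSup hψ.mem hψ.lt.le (hψ.not_le hφ hne.symm)

end IsCMI

section Modular

variable {a b c d a' b' : Setoid A}

include hInf hM in
theorem IsPrimeInterval.transposesUp (hb : b ∈ C) (hc : c ∈ C) (h : IsPrimeInterval C a b)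
    (hup : TransposesUp a b c d) : IsPrimeInterval C c d := by
  obtain ⟨rfl, rfl⟩ := hup
  refine ⟨lt_of_le_of_ne le_sup_right fun he => h.1.ne ?_, fun δ hδ hcδ hδd => ?_⟩
  · exact inf_eq_left.mpr (he ▸ le_sup_left)
  rcases h.2 (b ⊓ δ) (inf_mem_of_sInf_mem hInf hb hδ) (inf_le_inf_left b hcδ) inf_le_left
    with hbδ | hbδ
  · left
    calc δ = (c ⊔ b) ⊓ δ := by rw [sup_comm]; exact (inf_eq_right.mpr hδd).symm
      _ = c ⊔ b ⊓ δ := (hM c hc b hb δ hδ hcδ).symm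
      _ = c := by rw [hbδ]; exact sup_eq_left.mpr inf_le_right
  · exact Or.inr (le_antisymm hδd (sup_le (hbδ ▸ inf_le_right) hcδ))

include hSup hM in
theorem IsPrimeInterval.of_transposesUp (hb : b ∈ C) (hc : c ∈ C) (h : IsPrimeInterval C c d)
    (hup : TransposesUp a b c d) : IsPrimeInterval C a b := by
  obtain ⟨rfl, rfl⟩ := hup
  refine ⟨lt_of_le_of_ne inf_le_left fun he => h.1.ne ?_, fun δ hδ haδ hδb => ?_⟩
  · exact (sup_eq_right.mpr (he ▸ inf_le_right)).symm
  rcases h.2 (δ ⊔ c) (sup_mem_of_sSup_mem hSup hδ hc) le_sup_right (sup_le_sup_right hδb c)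
    with hδc | hδc
  · exact Or.inl (le_antisymm (le_inf hδb (hδc ▸ le_sup_left)) haδ)
  · right
    calc δ = δ ⊔ c ⊓ b := by rw [inf_comm]; exact (sup_eq_left.mpr haδ).symm
      _ = (δ ⊔ c) ⊓ b := hM δ hδ c hc b hb hδb
      _ = b := by rw [hδc]; exact inf_eq_right.mpr le_sup_left

include hM in
theorem TransposesUp.transposesUp_of_le (ha' : a' ∈ C) (hb : b ∈ C) (hc : c ∈ C)
    (h₁ : TransposesUp a b a' b') (h₂ : TransposesUp a b c d) (hle : a' ≤ c) :
    TransposesUp a' b' c d := by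
  obtain ⟨ha, rfl⟩ := h₁
  obtain ⟨ha₂, rfl⟩ := h₂
  refine ⟨?_, by rw [sup_assoc, sup_eq_right.mpr hle]⟩
  rw [sup_comm, ← hM a' ha' b hb c hc hle, ← ha₂, ha, inf_comm, sup_eq_left.mpr inf_le_left]

end Modular

section IndexTwo

variable {χ φ ψ p : Setoid A}

include hInf hSup hO in
theorem IsCMI.sup_theta_sup_theta_eq (hχ : IsCMI C χ p) {a b : A} (hab : p.r a b)
    (hχab : ¬χ.r a b) : χ ⊔ theta C one a ⊔ theta C one b = p ⊔ theta C one a := by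
  have hpab : p ⊔ theta C one a = p ⊔ theta C one b := (hO p hχ.cover_mem a b).mpr hab
  have hF : χ ⊔ theta C one a ⊔ theta C one b ∈ C :=
    sup_mem_of_sSup_mem hSup (sup_mem_of_sSup_mem hSup hχ.mem (theta_mem hInf one a))
      (theta_mem hInf one b)
  have hFab : (χ ⊔ theta C one a ⊔ theta C one b).r a b :=
    Setoid.trans' _ (Setoid.symm' _ ((le_sup_right.trans le_sup_left : theta C one a ≤ _)
      (theta_rel one a))) ((le_sup_right : theta C one b ≤ _) (theta_rel one b))
  refine le_antisymm ?_ (sup_le ?_ (le_sup_right.trans le_sup_left))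
  · exact sup_le (sup_le_sup_right hχ.lt.le _) (hpab ▸ le_sup_right)
  · exact hχ.cover_le_of_rel hF (le_sup_left.trans le_sup_left) hFab hχab

include hInf hSup hO in
theorem IsCMI.cover_le_sup_theta (hχ : IsCMI C χ p) {u v w : A} (huv : p.r u v) (huw : p.r u w)
    (hχuv : ¬χ.r u v) (hχuw : ¬χ.r u w) (hχvw : ¬χ.r v w) : p ≤ χ ⊔ theta C one u := by
  have hF : χ ⊔ theta C one u ∈ C := sup_mem_of_sSup_mem hSup hχ.mem (theta_mem hInf one u)
  have hFvw : (χ ⊔ theta C one u).r v w := by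
    rw [← hO _ hF, hχ.sup_theta_sup_theta_eq hInf hSup hO huv hχuv,
      hχ.sup_theta_sup_theta_eq hInf hSup hO huw hχuw]
  exact hχ.cover_le_of_rel hF le_sup_left hFvw hχvw

include hInf hSup hO in
theorem IsCMI.rel_of_not_rel_of_not_rel (hχ : IsCMI C χ p) {x y z : A} (hxy : p.r x y)
    (hyz : p.r y z) (hχxy : ¬χ.r x y) (hχyz : ¬χ.r y z) : χ.r x z := by
  -- Otherwise `χ ⊔ Θ(1,x)` and `χ ⊔ Θ(1,y)` both contain `p`, so (O) for `p` and `χ` gives `χ x y`.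
  by_contra hχxz
  have hxz : p.r x z := p.trans' hxy hyz
  have sup_theta_eq : ∀ u, p ≤ χ ⊔ theta C one u → χ ⊔ theta C one u = p ⊔ theta C one u :=
    fun u hu => le_antisymm (sup_le_sup_right hχ.lt.le _) (sup_le hu le_sup_right)
  have hx := sup_theta_eq x (hχ.cover_le_sup_theta hInf hSup hO hxy hxz hχxy hχxz hχyz)
  have hy := sup_theta_eq y (hχ.cover_le_sup_theta hInf hSup hO (p.symm' hxy) hyz
    (fun h => hχxy (χ.symm' h)) hχyz hχxz)
  refine hχxy ((hO χ hχ.mem x y).mp ?_)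
  rw [hx, hy, (hO p hχ.cover_mem x y).mpr hxy]

include hInf hSup hO in
theorem IsCMI.rel_iff (hχ : IsCMI C χ p) {x y z : A} (hxy : p.r x y) (hyz : p.r y z) :
    χ.r x z ↔ (χ.r x y ↔ χ.r y z) := by
  by_cases h₁ : χ.r x y <;> by_cases h₂ : χ.r y z
  · exact iff_of_true (χ.trans' h₁ h₂) (iff_of_true h₁ h₂)
  · exact iff_of_false (fun h => h₂ (χ.trans' (χ.symm' h₁) h)) (by simp [h₁, h₂])
  · exact iff_of_false (fun h => h₁ (χ.trans' h (χ.symm' h₂))) (by simp [h₁, h₂])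
  · exact iff_of_true (hχ.rel_of_not_rel_of_not_rel hInf hSup hO hxy hyz h₁ h₂) (by simp [h₁, h₂])

include hInf hSup hO in
theorem IsCMI.equivalence_bul (hφ : IsCMI C φ p) (hψ : IsCMI C ψ p) :
    Equivalence (Bul p φ ψ) where
  refl x := ⟨p.refl' x, iff_of_true (φ.refl' x) (ψ.refl' x)⟩
  symm h := ⟨p.symm' h.1, φ.comm'.trans (h.2.trans ψ.comm')⟩
  trans h₁ h₂ := ⟨p.trans' h₁.1 h₂.1, by
    rw [hφ.rel_iff hInf hSup hO h₁.1 h₂.1, hψ.rel_iff hInf hSup hO h₁.1 h₂.1, h₁.2, h₂.2]⟩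

end IndexTwo

section Maximal

variable {a b a' ψ Λ p : Setoid A}

include hInf hSup hDir in
theorem exists_isCMI_le_not_rel {σ : Setoid A} (hσ : σ ∈ C) {x y : A} (hxy : ¬σ.r x y) :
    ∃ ω, σ ≤ ω ∧ ¬ω.r x y ∧ IsCMI C ω (ω ⊔ theta C x y) := by
  obtain ⟨ω, hσω, ⟨hω, hωxy⟩, hmax⟩ := zorn_le_nonempty₀ {δ | δ ∈ C ∧ ¬δ.r x y}
    (fun c hc hchain δ hδ => ⟨sSup c, ⟨hSup c fun _ h => (hc h).1, fun h => by
      obtain ⟨s, hs, hsxy⟩ := (hDir c (fun _ h => (hc h).1) ⟨δ, hδ⟩ hchain.directedOn x y).mp h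
      exact (hc hs).2 hsxy⟩, fun _ => le_sSup⟩) σ ⟨hσ, hxy⟩
  refine ⟨ω, hσω, hωxy, hω, sup_mem_of_sSup_mem hSup hω (theta_mem hInf x y), ?_, ?_⟩
  · exact lt_of_le_of_ne le_sup_left fun he =>
      hωxy (he ▸ (le_sup_right : theta C x y ≤ _) (theta_rel x y))
  · intro β hβ hωβ
    by_cases hβxy : β.r x y
    · exact sup_le hωβ.le (theta_le hβ hβxy)
    · exact absurd (hmax ⟨hβ, hβxy⟩ hωβ.le) (not_le_of_gt hωβ)

include hInf hSup hDir hM in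
theorem IsPrimeInterval.exists_isCMI_transposesUp (ha' : a' ∈ C) (hb : b ∈ C)
    (h : IsPrimeInterval C a b) (ha : a = b ⊓ a') :
    ∃ ω, a' ≤ ω ∧ IsCMI C ω (b ⊔ ω) ∧ TransposesUp a b ω (b ⊔ ω) := by
  obtain ⟨x, y, hbxy, haxy⟩ : ∃ x y, b.r x y ∧ ¬a.r x y := by
    simpa [Setoid.le_def] using not_le_of_gt h.1
  have ha'xy : ¬a'.r x y := fun h' => haxy (ha ▸ ⟨hbxy, h'⟩)
  obtain ⟨ω, ha'ω, hωxy, hω⟩ := exists_isCMI_le_not_rel hInf hSup hDir ha' ha'xy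
  have hbω : a = b ⊓ ω := by
    rcases h.2 (b ⊓ ω) (inf_mem_of_sInf_mem hInf hb hω.mem)
      (le_inf h.1.le ((ha.trans_le inf_le_right).trans ha'ω)) inf_le_left with e | e
    · exact e.symm
    · exact absurd ((e.symm.trans_le inf_le_right : b ≤ ω) hbxy) hωxy
  have hup : TransposesUp a b ω (b ⊔ ω) := ⟨hbω, rfl⟩
  have hcover : ω ⊔ theta C x y = b ⊔ ω := by
    rcases (h.transposesUp hInf hM hb hω.mem hup).2 _ hω.cover_mem le_sup_left
      (sup_le le_sup_right ((theta_le hb hbxy).trans le_sup_left)) with e | e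
    · exact absurd e hω.lt.ne'
    · exact e
  exact ⟨ω, ha'ω, hcover ▸ hω, hup⟩

include hInf hSup hDir hM hP in
theorem IsCMI.exists_isCMI_transposesUp (hψ : IsCMI C ψ p) (ha' : a' ∈ C) (hb : b ∈ C)
    (ha : a = b ⊓ a') (hup : TransposesUp a b ψ p) :
    ∃ ω, a' ≤ ω ∧ IsCMI C ω p ∧ TransposesUp a b ω p := by
  have haC : a ∈ C := ha ▸ inf_mem_of_sInf_mem hInf hb ha'
  obtain ⟨ω, ha'ω, hω, hupω⟩ :=
    (hψ.isPrimeInterval.of_transposesUp hSup hM hb hψ.mem hup).exists_isCMI_transposesUp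
      hInf hSup hDir hM ha' hb ha
  have hcover : b ⊔ ω = p := hP ω ψ _ _ hω hψ <|
    .head (hupω.persp_symm haC hb hω.mem hω.cover_mem) <|
      .single (hup.persp haC hb hψ.mem hψ.cover_mem)
  exact ⟨ω, ha'ω, hcover ▸ hω, hcover ▸ hupω⟩

include hInf hSup hDir hM hP in
theorem IsCMI.isCMI_of_transposesUp (hψ : IsCMI C ψ p) (hb : b ∈ C) (hΛ : Λ ∈ C)
    (hup : TransposesUp a b ψ p) (hupΛ : TransposesUp a b Λ p) : IsCMI C Λ p := by
  obtain ⟨ω, hΛω, hω, hupω⟩ := hψ.exists_isCMI_transposesUp hInf hSup hDir hM hP hΛ hb hupΛ.1 hup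
  have hΛω : Λ = ω :=
    (hupΛ.transposesUp_of_le hM hΛ hb hω.mem hupω hΛω).1.trans (inf_eq_right.mpr hω.lt.le)
  exact hΛω ▸ hω

end Maximal

section Closure

variable {φ ψ Λ p : Setoid A}

include hInf hSup hO in
theorem IsCMI.rel_eq_bul (hφ : IsCMI C φ p) (hψ : IsCMI C ψ p) (hΛ : IsCMI C Λ p) (hne : φ ≠ ψ)
    (hΛB : ∀ x y, Λ.r x y → Bul p φ ψ x y) (hφψΛ : φ ⊓ ψ ≤ Λ) : Λ.r = Bul p φ ψ := by
  have hS : Equivalence fun x y => p.r x y ∧ (Λ.r x y ↔ (φ.r x y ↔ ψ.r x y)) :=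
    { refl := fun x => ⟨p.refl' x, iff_of_true (Λ.refl' x) (iff_of_true (φ.refl' x) (ψ.refl' x))⟩
      symm := fun h => ⟨p.symm' h.1, Λ.comm'.trans (h.2.trans (iff_congr φ.comm' ψ.comm'))⟩
      trans := fun h₁ h₂ => ⟨p.trans' h₁.1 h₂.1, by
        rw [hΛ.rel_iff hInf hSup hO h₁.1 h₂.1, hφ.rel_iff hInf hSup hO h₁.1 h₂.1,
          hψ.rel_iff hInf hSup hO h₁.1 h₂.1, h₁.2, h₂.2]
        exact iff_iff_iff_comm⟩ }
  have hpS : p ≤ ⟨_, hS⟩ := (hφ.sup_eq hSup hψ hne).ge.trans <| sup_le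
    (fun _ _ h => ⟨hφ.lt.le h, ⟨fun h' => iff_of_true h ((hΛB _ _ h').2.mp h),
      fun h' => hφψΛ ⟨h, h'.mp h⟩⟩⟩)
    (fun _ _ h => ⟨hψ.lt.le h, ⟨fun h' => iff_of_true ((hΛB _ _ h').2.mpr h) h,
      fun h' => hφψΛ ⟨h'.mpr h, h⟩⟩⟩)
  funext x y
  exact propext ⟨hΛB x y, fun hB => (hpS hB.1).2.mpr hB.2⟩

include hInf hSup hDir hM hO hP in
/-- The largest member `Λ` of `C` inside `φ • ψ` is completely meet irreducible with cover `p`,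
because `I[ψ ⊓ φ, ψ]` transposes up both to `I[φ, p]` and to `I[Λ, p]`; the parity rules then make
it all of `φ • ψ`. -/
theorem IsCMI.exists_isCMI_rel_eq_bul (hφ : IsCMI C φ p) (hψ : IsCMI C ψ p) (hne : φ ≠ ψ)
    {σ : Setoid A} (hσ : σ ∈ C) (hσp : σ ≤ p) (hσφψ : σ ⊓ φ = σ ⊓ ψ) (hσφ : ¬σ ≤ φ) :
    ∃ γ, IsCMI C γ p ∧ Projective C (γ, p) (φ, p) ∧ γ.r = Bul p φ ψ := by
  let B : Setoid A := ⟨Bul p φ ψ, hφ.equivalence_bul hInf hSup hO hψ⟩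
  let Λ := sSup {δ | δ ∈ C ∧ δ ≤ B}
  have hΛ : Λ ∈ C := hSup _ fun _ h => h.1
  have hΛB : Λ ≤ B := sSup_le fun _ h => h.2
  have hΛp : Λ ≤ p := fun _ _ h => (hΛB h).1
  have hμ : ψ ⊓ φ ∈ C := inf_mem_of_sInf_mem hInf hψ.mem hφ.mem
  have hμΛ : ψ ⊓ φ ≤ Λ := le_sSup ⟨hμ, fun _ _ h => ⟨hψ.lt.le h.1, iff_of_true h.2 h.1⟩⟩
  have hσΛ : σ ≤ Λ := le_sSup ⟨hσ, fun x y h => ⟨hσp h,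
    fun h' => (show (σ ⊓ ψ).r x y from hσφψ ▸ ⟨h, h'⟩).2,
    fun h' => (show (σ ⊓ φ).r x y from hσφψ ▸ ⟨h, h'⟩).2⟩⟩
  have hΛψ : ¬Λ ≤ ψ := fun h => hσφ fun _ _ hxy => (hΛB (hσΛ hxy)).2.mpr (h (hσΛ hxy))
  have hupφ : TransposesUp (ψ ⊓ φ) ψ φ p := ⟨rfl, (hψ.sup_eq hSup hφ hne.symm).symm⟩
  have hupΛ : TransposesUp (ψ ⊓ φ) ψ Λ p :=
    ⟨le_antisymm (le_inf inf_le_left hμΛ) (fun _ _ h => ⟨h.1, (hΛB h.2).2.mpr h.1⟩),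
      (hψ.sup_eq_of_not_le hSup hΛ hΛp hΛψ).symm⟩
  have hΛcmi := hφ.isCMI_of_transposesUp hInf hSup hDir hM hP hψ.mem hΛ hupφ hupΛ
  refine ⟨Λ, hΛcmi, .head (hupΛ.persp_symm hμ hψ.mem hΛ hφ.cover_mem)
    (.single (hupφ.persp hμ hψ.mem hφ.mem hφ.cover_mem)), ?_⟩
  exact hφ.rel_eq_bul hInf hSup hO hψ hΛcmi hne (fun _ _ h => hΛB h) (inf_comm φ ψ ▸ hμΛ)

end Closure

-- The case `φ = ω` is the one where `φ • ω = p`, which is not completely meet irreducible.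
def BulRealized (C : Set (Setoid A)) (p φ ω : Setoid A) : Prop :=
  φ = ω ∨ ∃ γ, IsCMI C γ p ∧ Projective C (γ, p) (φ, p) ∧ γ.r = Bul p φ ω

section Realized

variable {φ ω ω' a b p η : Setoid A}

include hInf hSup hDir hM hO hP in
theorem IsCMI.bulRealized_of_transposesUp (hω : IsCMI C ω p) (hω' : IsCMI C ω' p) (hb : b ∈ C)
    (hup : TransposesUp a b ω p) (hup' : TransposesUp a b ω' p) : BulRealized C p ω ω' := by
  by_cases hne : ω = ω'
  · exact Or.inl hne
  have hbω : ¬b ≤ ω := fun h => hω.lt.ne (hup.2.trans (sup_eq_right.mpr h)).symm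
  exact Or.inr (hω.exists_isCMI_rel_eq_bul hInf hSup hDir hM hO hP hω' hne hb
    (le_sup_left.trans hup.2.ge) (hup.1.symm.trans hup'.1) hbω)

include hInf hR in
theorem IsCMI.exists_rel_one_not_rel (hφ : IsCMI C φ p) (hω : IsCMI C ω p) (hne : φ ≠ ω) :
    ∃ w, φ.r one w ∧ ¬ω.r one w := by
  by_contra! h
  have hφω : φ = φ ⊓ ω := hR φ hφ.mem _ (inf_mem_of_sInf_mem hInf hφ.mem hω.mem)
    fun x => ⟨fun h' => ⟨h', h x h'⟩, And.left⟩
  exact hφ.not_le hω hne (hφω.trans_le inf_le_right)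

include hInf hR in
theorem IsCMI.exists_rel_not_rel_of_rel_eq_bul {D : Setoid A} (hφ : IsCMI C φ p)
    (hD : IsCMI C D p) (hω : IsCMI C ω p) (hω' : IsCMI C ω' p) (hDr : D.r = Bul p φ ω)
    (hDω' : D ≠ ω') : ∃ c d, p.r c d ∧ ¬φ.r c d ∧ ¬ω.r c d ∧ ¬ω'.r c d := by
  obtain ⟨z, hDz, hω'z⟩ := hD.exists_rel_one_not_rel hInf hR hω' hDω'
  obtain ⟨t, hDt, hωt⟩ :=
    hD.exists_rel_one_not_rel hInf hR hω (ne_of_rel_eq_bul (not_le_of_gt hφ.lt) hDr)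
  rw [hDr] at hDz hDt
  obtain ⟨hpz, hz⟩ := hDz
  have hφt : ¬φ.r one t := fun h => hωt (hDt.2.mp h)
  by_cases hφz : φ.r one z
  · by_cases hω't : ω'.r one t
    · exact ⟨t, z, p.trans' (p.symm' hDt.1) hpz, fun h => hφt (φ.trans' hφz (φ.symm' h)),
        fun h => hωt (ω.trans' (hz.mp hφz) (ω.symm' h)), fun h => hω'z (ω'.trans' hω't h)⟩
    · exact ⟨one, t, hDt.1, hφt, hωt, hω't⟩
  · exact ⟨one, z, hpz, hφz, fun h => hφz (hz.mpr h), hω'z⟩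

include hInf hSup hDir hM hO hR hP in
/-- `φ • ω' = (φ • ω) • (ω • ω')` contains `(φ • ω) ⊓ (ω • ω')`, which is not below `φ` unless
`φ • ω = ω'`. -/
theorem BulRealized.trans (hφ : IsCMI C φ p) (hω : IsCMI C ω p) (hω' : IsCMI C ω' p)
    (hωφ : Projective C (ω, p) (φ, p)) (h₁ : BulRealized C p φ ω) (h₂ : BulRealized C p ω ω') :
    BulRealized C p φ ω' := by
  rcases h₁ with rfl | ⟨D, hD, hDφ, hDr⟩
  · exact h₂
  rcases h₂ with rfl | ⟨E, hE, -, hEr⟩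
  · exact Or.inr ⟨D, hD, hDφ, hDr⟩
  by_cases hφω' : φ = ω'
  · exact Or.inl hφω'
  right
  by_cases hDω' : D = ω'
  · subst hDω'
    refine ⟨ω, hω, hωφ, ?_⟩
    rw [← bul_assoc bul_self.symm hDr, bul_comm, bul_cover hω.lt.le]
  obtain ⟨c, d, hpcd, hφcd, hωcd, hω'cd⟩ :=
    hφ.exists_rel_not_rel_of_rel_eq_bul hInf hR hD hω hω' hDr hDω'
  have hDE : ∀ x y, (D ⊓ E).r x y ↔ p.r x y ∧ (φ.r x y ↔ ω.r x y) ∧ (ω.r x y ↔ ω'.r x y) :=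
    fun x y => by
      change D.r x y ∧ E.r x y ↔ _
      rw [hDr, hEr]
      unfold Bul
      tauto
  refine hφ.exists_isCMI_rel_eq_bul hInf hSup hDir hM hO hP hω' hφω'
    (inf_mem_of_sInf_mem hInf hD.mem hE.mem) (inf_le_left.trans hD.lt.le) ?_
    fun h => hφcd (h ((hDE c d).mpr ⟨hpcd, iff_of_false hφcd hωcd, iff_of_false hωcd hω'cd⟩))
  refine Setoid.ext fun x y => ?_
  change (D ⊓ E).r x y ∧ φ.r x y ↔ (D ⊓ E).r x y ∧ ω'.r x y
  rw [hDE]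
  tauto

include hInf hSup hDir hM hO hR hP in
/-- An up step from `J` to `J'` passes from `ω` to an `ω'` to which both `J` and `J'` transpose
up; `ω • ω'` is realized because `J` transposes up to both `I[ω, p]` and `I[ω', p]`. -/
theorem IsCMI.exists_bulRealized_of_projective (hφ : IsCMI C φ p) {J : Setoid A × Setoid A}
    (hJ : Projective C (φ, p) J) : ∃ ω, IsCMI C ω p ∧ Projective C (ω, p) (φ, p) ∧
      TransposesUp J.1 J.2 ω p ∧ BulRealized C p φ ω := by
  induction hJ with
  | refl =>
    exact ⟨φ, hφ, .refl, ⟨(inf_eq_right.mpr hφ.lt.le).symm, (sup_eq_left.mpr hφ.lt.le).symm⟩,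
      Or.inl rfl⟩
  | tail _ hstep ih =>
    obtain ⟨ω, hω, hωφ, hJω, hφω⟩ := ih
    obtain ⟨ha, hb, ha', -, hup | hdown⟩ := hstep
    · obtain ⟨ω', ha'ω', hω', hJω'⟩ :=
        hω.exists_isCMI_transposesUp hInf hSup hDir hM hP ha' hb hup.1 hJω
      refine ⟨ω', hω', ?_, TransposesUp.transposesUp_of_le hM ha' hb hω'.mem hup hJω' ha'ω', ?_⟩
      · exact .head (hJω'.persp_symm ha hb hω'.mem hω'.cover_mem)
          (.head (hJω.persp ha hb hω.mem hω.cover_mem) hωφ)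
      · exact hφω.trans hInf hSup hDir hM hO hR hP hφ hω hω' hωφ
          (hω.bulRealized_of_transposesUp hInf hSup hDir hM hO hP hω' hb hJω hJω')
    · exact ⟨ω, hω, hωφ, TransposesUp.trans hdown hJω, hφω⟩

include hP in
theorem PIP.isCMI_projective (hη : IsCMI C η p) (h : PIP C φ η) :
    IsCMI C φ p ∧ Projective C (φ, p) (η, p) := by
  obtain ⟨q, q', hφq, hηq', hproj⟩ := h
  obtain rfl := hη.cover_unique hηq'
  obtain rfl := hP φ η q p hφq hη hproj
  exact ⟨hφq, hproj⟩

include hP in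
theorem mem_and_le_cover_of_mem (hη : IsCMI C η p) (hφ : φ ∈ {ψ | PIP C ψ η} ∪ {p}) :
    φ ∈ C ∧ φ ≤ p := by
  rcases hφ with hφ | rfl
  · exact ⟨(hφ.isCMI_projective hP hη).1.mem, (hφ.isCMI_projective hP hη).1.lt.le⟩
  · exact ⟨hη.cover_mem, le_rfl⟩

include hInf hSup hDir hM hO hR hP in
theorem IsCMI.bulRealized_of_projective (hφ : IsCMI C φ p) {χ : Setoid A}
    (h : Projective C (φ, p) (χ, p)) : BulRealized C p φ χ := by
  obtain ⟨ω, hω, -, hχω, hφω⟩ := hφ.exists_bulRealized_of_projective hInf hSup hDir hM hO hR hP h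
  have hχ : χ = ω := hχω.1.trans (inf_eq_right.mpr hω.lt.le)
  exact hχ ▸ hφω

include hInf hSup hDir hM hO hR hP in
theorem exists_mem_rel_eq_bul (hη : IsCMI C η p) {φ χ : Setoid A}
    (hφ : φ ∈ {ψ | PIP C ψ η} ∪ {p}) (hχ : χ ∈ {ψ | PIP C ψ η} ∪ {p}) :
    ∃ γ ∈ {ψ | PIP C ψ η} ∪ {p}, γ ∈ C ∧ γ.r = Bul p φ χ := by
  rcases hχ with hχ | rfl
  · rcases hφ with hφ | rfl
    · obtain ⟨hφp, hφη⟩ := hφ.isCMI_projective hP hη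
      obtain ⟨-, hχη⟩ := hχ.isCMI_projective hP hη
      rcases hφp.bulRealized_of_projective hInf hSup hDir hM hO hR hP (hφη.trans hχη.symm)
        with rfl | ⟨γ, hγ, hγφ, hγr⟩
      · exact ⟨p, Or.inr rfl, hη.cover_mem, bul_self.symm⟩
      · exact ⟨γ, Or.inl ⟨p, p, hγ, hη, hγφ.trans hφη⟩, hγ.mem, hγr⟩
    · obtain ⟨hχC, hχp⟩ := mem_and_le_cover_of_mem hP hη (Or.inl hχ)
      exact ⟨χ, Or.inl hχ, hχC, bul_comm ▸ (bul_cover hχp).symm⟩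
  · obtain ⟨hφC, hφp⟩ := mem_and_le_cover_of_mem hP hη hφ
    exact ⟨φ, hφ, hφC, (bul_cover hφp).symm⟩

end Realized

end

/-- Theorem 10: each PIP class `U` of completely meet irreducible congruences,
supplemented with the common cover `p = η⁺`, is a Boolean group under `•`
(the complement of symmetric difference restricted to `η⁺`): `•` maps `Ū × Ū` into
`Ū` (in particular `φ • ψ` is an equivalence relation belonging to `C`), is
associative and commutative, has identity `p`, and every element is its own
inverse. -/
theorem stmt7 (one : A) (C : Set (Setoid A))
    (hInf : ∀ S ⊆ C, sInf S ∈ C) (hSup : ∀ S ⊆ C, sSup S ∈ C)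
    (hDir : ∀ D ⊆ C, D.Nonempty → DirectedOn (· ≤ ·) D →
      ∀ x y : A, (sSup D).r x y ↔ ∃ s ∈ D, s.r x y)
    (hM : ∀ x ∈ C, ∀ y ∈ C, ∀ z ∈ C, x ≤ z → x ⊔ y ⊓ z = (x ⊔ y) ⊓ z)
    (hO : ∀ α ∈ C, ∀ a b : A, α ⊔ theta C one a = α ⊔ theta C one b ↔ α.r a b)
    (hR : ∀ α ∈ C, ∀ β ∈ C, (∀ x : A, α.r one x ↔ β.r one x) → α = β)
    (hP : ∀ φ ψ p q : Setoid A, IsCMI C φ p → IsCMI C ψ q →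
      Projective C (φ, p) (ψ, q) → p = q)
    (η p : Setoid A) (hη : IsCMI C η p) :
    ∃ op : Setoid A → Setoid A → Setoid A,
      (∀ φ ∈ {ψ | PIP C ψ η} ∪ {p}, ∀ χ ∈ {ψ | PIP C ψ η} ∪ {p},
        op φ χ ∈ {ψ | PIP C ψ η} ∪ {p} ∧ op φ χ ∈ C ∧ (op φ χ).r = Bul p φ χ) ∧
      (∀ φ ∈ {ψ | PIP C ψ η} ∪ {p}, ∀ χ ∈ {ψ | PIP C ψ η} ∪ {p},
        ∀ ρ ∈ {ψ | PIP C ψ η} ∪ {p}, op (op φ χ) ρ = op φ (op χ ρ)) ∧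
      (∀ φ ∈ {ψ | PIP C ψ η} ∪ {p}, ∀ χ ∈ {ψ | PIP C ψ η} ∪ {p}, op φ χ = op χ φ) ∧
      (∀ φ ∈ {ψ | PIP C ψ η} ∪ {p}, op φ p = φ ∧ op φ φ = p) := by
  have hop : ∀ φ ∈ {ψ | PIP C ψ η} ∪ {p}, ∀ χ ∈ {ψ | PIP C ψ η} ∪ {p},
      bulOp p φ χ ∈ {ψ | PIP C ψ η} ∪ {p} ∧ bulOp p φ χ ∈ C ∧ (bulOp p φ χ).r = Bul p φ χ := by
    intro φ hφ χ hχ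
    obtain ⟨γ, hγU, hγC, hγr⟩ := exists_mem_rel_eq_bul hInf hSup hDir hM hO hR hP hη hφ hχ
    rw [bulOp_eq hγr]
    exact ⟨hγU, hγC, hγr⟩
  refine ⟨bulOp p, hop, fun φ hφ χ hχ ρ hρ => ?_, fun φ hφ χ hχ => ?_, fun φ hφ => ⟨?_, ?_⟩⟩
  · exact bulOp_eq <| (hop φ hφ _ (hop χ hχ ρ hρ).1).2.2.trans
      (bul_assoc (hop φ hφ χ hχ).2.2 (hop χ hχ ρ hρ).2.2).symm
  · exact bulOp_eq <| (hop χ hχ φ hφ).2.2.trans bul_comm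
  · exact bulOp_eq (bul_cover (mem_and_le_cover_of_mem hP hη hφ).2).symm
  · exact bulOp_eq bul_self.symm
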